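/- arXiv:2205.13596 — 2 statements merged into one kernel-verified Lean document; each statement's English description precedes it below -/
import Mathlib

section
/- Let U be an n×n real positive semidefinite matrix. Then tan(U) = { W + Wᵀ : W ∈ ℝ^{n×n}, and the 2n×2n block matrix [[U, W],[Wᵀ, βI]] is positive semidefinite for some β ∈ ℝ }. -/
/-!
If `range W ⊆ range U` then `W = U A`, and `[[U, U A], [Aᵀ U, β I]]` is the psd matrix
`[I A]ᵀ U [I A]` plus `diag(0, β I - Aᵀ U A)`, which is psd as soon as `β` bounds the spectrum
of `Aᵀ U A`. Conversely, if the block matrix `M` is psd and `U z = 0`, the quadratic form of `M`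
vanishes at `(z, 0)`, so `M (z, 0) = (0, Wᵀ z)` vanishes; thus `ker U ⊆ ker Wᵀ`, which by
orthogonal complements means `range W ⊆ range U`.
-/

open Matrix

/-- The tangent space of the psd cone at a psd matrix `U`:
`tan(U) = { W + Wᵀ : range W ⊆ range U }`. -/
def tanSpace {n : ℕ} (U : Matrix (Fin n) (Fin n) ℝ) : Set (Matrix (Fin n) (Fin n) ℝ) :=
  {V | ∃ W : Matrix (Fin n) (Fin n) ℝ, V = W + Wᵀ ∧
    LinearMap.range W.mulVecLin ≤ LinearMap.range U.mulVecLin}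

open scoped ComplexOrder

namespace Matrix

variable {𝕜 : Type*} [RCLike 𝕜] {m n : Type*} [Fintype m] [Fintype n]

theorem exists_eq_mul_of_range_mulVecLin_le {R : Type*} [CommSemiring R] [DecidableEq m]
    {U : Matrix n n R} {W : Matrix n m R}
    (h : LinearMap.range W.mulVecLin ≤ LinearMap.range U.mulVecLin) :
    ∃ A : Matrix n m R, W = U * A := by
  choose v hv using fun j => h ⟨Pi.single j 1, rfl⟩
  refine ⟨(of v)ᵀ, ext fun i j => ?_⟩
  have := congrFun (hv j) i
  simp_all [mul_apply, mulVec, dotProduct, Pi.single_apply]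

theorem range_mulVecLin_le_of_ker_conjTranspose_le [DecidableEq m] [DecidableEq n]
    {A B : Matrix m n 𝕜} (h : LinearMap.ker Bᴴ.mulVecLin ≤ LinearMap.ker Aᴴ.mulVecLin) :
    LinearMap.range A.mulVecLin ≤ LinearMap.range B.mulVecLin := by
  have hle : LinearMap.range (toEuclideanLin A) ≤ LinearMap.range (toEuclideanLin B) := by
    rw [← (LinearMap.range (toEuclideanLin A)).orthogonal_orthogonal,
      ← (LinearMap.range (toEuclideanLin B)).orthogonal_orthogonal,
      LinearMap.orthogonal_range, LinearMap.orthogonal_range,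
      ← toEuclideanLin_conjTranspose_eq_adjoint, ← toEuclideanLin_conjTranspose_eq_adjoint]
    exact Submodule.orthogonal_le fun z hz =>
      congrArg (WithLp.toLp 2) (h (congrArg WithLp.ofLp hz))
  rintro _ ⟨x, rfl⟩
  obtain ⟨y, hy⟩ := hle (LinearMap.mem_range_self _ (WithLp.toLp 2 x))
  exact ⟨WithLp.ofLp y, congrArg WithLp.ofLp hy⟩

theorem PosSemidef.fromBlocks₂₁_mulVec_eq_zero {A : Matrix m m 𝕜} {B : Matrix m n 𝕜}
    {C : Matrix n m 𝕜} {D : Matrix n n 𝕜} (hM : (fromBlocks A B C D).PosSemidef) {z : m → 𝕜}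
    (hz : A *ᵥ z = 0) : C *ᵥ z = 0 := by
  have h := (hM.dotProduct_mulVec_zero_iff (Sum.elim z 0)).mp (by
    simp [fromBlocks_mulVec, hz, dotProduct])
  exact funext fun i => by simpa [fromBlocks_mulVec] using congrFun h (Sum.inr i)

open scoped MatrixOrder in
theorem IsHermitian.exists_posSemidef_smul_one_sub [DecidableEq n] {M : Matrix n n 𝕜}
    (hM : M.IsHermitian) : ∃ β : ℝ, (β • (1 : Matrix n n 𝕜) - M).PosSemidef := by
  obtain ⟨β, hβ⟩ := M.finite_real_spectrum.bddAbove
  have := le_algebraMap_of_spectrum_le (fun x hx => hβ hx) (a := M) hM.isSelfAdjoint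
  exact ⟨β, by rwa [Matrix.le_iff, Algebra.algebraMap_eq_smul_one] at this⟩

theorem PosSemidef.fromBlocks_mul_of_posSemidef_sub [DecidableEq m] [DecidableEq n]
    {U : Matrix n n 𝕜} (hU : U.PosSemidef) (A : Matrix n m 𝕜) {D : Matrix m m 𝕜}
    (hD : (D - Aᴴ * U * A).PosSemidef) :
    (fromBlocks U (U * A) (Aᴴ * U) D).PosSemidef := by
  have h := (hU.conjTranspose_mul_mul_same (fromCols 1 A)).add
    (hD.conjTranspose_mul_mul_same (fromCols (0 : Matrix m n 𝕜) 1))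
  convert h using 1
  simp only [conjTranspose_fromCols_eq_fromRows_conjTranspose, fromRows_mul]
  ext (i | i) (j | j) <;> simp [Matrix.mul_assoc]

end Matrix

/-- `tan(U) = { W + Wᵀ : [[U, W], [Wᵀ, βI]] ⪰ 0 for some β ∈ ℝ }`. -/
theorem stmt_4 (n : ℕ) (U : Matrix (Fin n) (Fin n) ℝ) (hU : U.PosSemidef) :
    tanSpace U =
      {V : Matrix (Fin n) (Fin n) ℝ | ∃ W : Matrix (Fin n) (Fin n) ℝ, ∃ β : ℝ,
        V = W + Wᵀ ∧
        (Matrix.fromBlocks U W Wᵀ (β • (1 : Matrix (Fin n) (Fin n) ℝ))).PosSemidef} := by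
  ext V
  constructor
  · rintro ⟨W, rfl, hW⟩
    obtain ⟨A, rfl⟩ := exists_eq_mul_of_range_mulVecLin_le hW
    obtain ⟨β, hβ⟩ := (hU.conjTranspose_mul_mul_same A).isHermitian.exists_posSemidef_smul_one_sub
    refine ⟨U * A, β, rfl, ?_⟩
    rw [transpose_mul, show Uᵀ = U from hU.1.eq]
    exact hU.fromBlocks_mul_of_posSemidef_sub A hβ
  · rintro ⟨W, β, rfl, hM⟩
    refine ⟨W, rfl, range_mulVecLin_le_of_ker_conjTranspose_le fun z hz => ?_⟩
    exact hM.fromBlocks₂₁_mulVec_eq_zero (hU.1.eq ▸ hz)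
end

section
/- Consider the 4×4 SDP: sup x₂ + x₃ subject to x₁A₁ + x₂A₂ + x₃A₃ ⪯ B, where A₁ = E₁₁, A₂ = E₂₂ + E₁₃ + E₃₁, A₃ = E₃₃ + E₂₄ + E₄₂, B = E₁₁ + E₂₂ (E_{ij} denotes the matrix unit). Then every feasible x satisfies x₂ = x₃ = 0, so the optimal value of this SDP is 0. -/
/-!
In a positive semidefinite matrix a zero diagonal entry forces its whole row to vanish (the 2×2
principal minors are nonnegative). The slack `S` has (1-based) `S₄₄ = 0`, so `S₂₄ = -x₃ = 0`; then
`S₃₃ = -x₃ = 0`, so `S₁₃ = -x₂ = 0`. Since `x = 0` is feasible, the optimal value is `0`.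
-/

open Matrix
open scoped ComplexOrder

theorem Matrix.PosSemidef.apply_eq_zero_of_diag_eq_zero {n 𝕜 : Type*} [Fintype n] [RCLike 𝕜]
    {A : Matrix n n 𝕜} (hA : A.PosSemidef) {i : n} (hi : A i i = 0) (j : n) : A i j = 0 := by
  have hdet := (hA.submatrix ![i, j]).det_nonneg
  have hji : A j i = star (A i j) := by simpa using (hA.1.apply j i).symm
  rw [det_fin_two] at hdet
  simp only [submatrix_apply, cons_val_zero, cons_val_one, hi, zero_mul, zero_sub, hji,
    RCLike.star_def, RCLike.mul_conj, neg_nonneg] at hdet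
  have : ‖A i j‖ ^ 2 ≤ 0 := by exact_mod_cast hdet
  simpa using this

def sdpSlack (x₁ x₂ x₃ : ℝ) : Matrix (Fin 4) (Fin 4) ℝ :=
  !![1,0,0,0; 0,1,0,0; 0,0,0,0; 0,0,0,0]
    - x₁ • !![1,0,0,0; 0,0,0,0; 0,0,0,0; 0,0,0,0]
    - x₂ • !![0,0,1,0; 0,1,0,0; 1,0,0,0; 0,0,0,0]
    - x₃ • !![0,0,0,0; 0,0,0,1; 0,0,1,0; 0,1,0,0]

theorem eq_zero_of_sdpSlack_posSemidef {x₁ x₂ x₃ : ℝ} (h : (sdpSlack x₁ x₂ x₃).PosSemidef) :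
    x₂ = 0 ∧ x₃ = 0 := by
  have hx₃ : x₃ = 0 := by
    simpa [sdpSlack] using h.apply_eq_zero_of_diag_eq_zero (i := 3) (by simp [sdpSlack]) 1
  have hx₂ : x₂ = 0 := by
    simpa [sdpSlack] using h.apply_eq_zero_of_diag_eq_zero (i := 2) (by simp [sdpSlack, hx₃]) 0
  exact ⟨hx₂, hx₃⟩

theorem sdpSlack_zero_posSemidef : (sdpSlack 0 0 0).PosSemidef := by
  have : sdpSlack 0 0 0 = diagonal ![1, 1, 0, 0] := by
    ext i j
    fin_cases i <;> fin_cases j <;> simp [sdpSlack]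
  rw [this, posSemidef_diagonal_iff]
  intro i
  fin_cases i <;> simp

/-- For the 4×4 SDP `sup x₂ + x₃ s.t. x₁A₁ + x₂A₂ + x₃A₃ ⪯ B`, every feasible `x` has
`x₂ = x₃ = 0`, and the optimal value is `0`. -/
theorem stmt_17 :
    (∀ x₁ x₂ x₃ : ℝ,
      ((!![1,0,0,0; 0,1,0,0; 0,0,0,0; 0,0,0,0]
        - x₁ • !![1,0,0,0; 0,0,0,0; 0,0,0,0; 0,0,0,0]
        - x₂ • !![0,0,1,0; 0,1,0,0; 1,0,0,0; 0,0,0,0]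
        - x₃ • !![0,0,0,0; 0,0,0,1; 0,0,1,0; 0,1,0,0] : Matrix (Fin 4) (Fin 4) ℝ)).PosSemidef →
        x₂ = 0 ∧ x₃ = 0) ∧
    IsGreatest {v : ℝ | ∃ x₁ x₂ x₃ : ℝ,
      ((!![1,0,0,0; 0,1,0,0; 0,0,0,0; 0,0,0,0]
        - x₁ • !![1,0,0,0; 0,0,0,0; 0,0,0,0; 0,0,0,0]
        - x₂ • !![0,0,1,0; 0,1,0,0; 1,0,0,0; 0,0,0,0]
        - x₃ • !![0,0,0,0; 0,0,0,1; 0,0,1,0; 0,1,0,0] : Matrix (Fin 4) (Fin 4) ℝ)).PosSemidef ∧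
      v = x₂ + x₃} 0 := by
  refine ⟨fun _ _ _ => eq_zero_of_sdpSlack_posSemidef,
    ⟨0, 0, 0, sdpSlack_zero_posSemidef, by simp⟩, ?_⟩
  rintro v ⟨x₁, x₂, x₃, h, rfl⟩
  obtain ⟨rfl, rfl⟩ := eq_zero_of_sdpSlack_posSemidef h
  simp
end
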